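/- Let H be a reduced hypergraph. Then ghw(H) ≤ tw(H^d) + 1, where tw(H^d) is the treewidth of the dual hypergraph H^d and ghw(H) is the generalised hypertree width of H. -/

import Mathlib

namespace DilutionPaper

universe u v w

/-- A (finite) hypergraph: a finite vertex set together with a set of
hyperedges, each a subset of the vertex set. -/
structure Hypergraph (α : Type u) [DecidableEq α] where
  verts : Finset α
  edges : Finset (Finset α)
  valid : ∀ e ∈ edges, e ⊆ verts

variable {α : Type u} {β : Type v} {γ : Type w}
variable [DecidableEq α] [DecidableEq β] [DecidableEq γ]

namespace Hypergraph

/-- The set `I_v` of edges incident to a vertex. -/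
def incident (H : Hypergraph α) (vtx : α) : Finset (Finset α) :=
  H.edges.filter (fun e => vtx ∈ e)

/-- The degree of a hypergraph: the maximum degree of a vertex. -/
def degree (H : Hypergraph α) : ℕ :=
  H.verts.sup fun vtx => (H.incident vtx).card

/-- The rank: maximum cardinality of an edge. -/
def rank (H : Hypergraph α) : ℕ := H.edges.sup Finset.card

/-- Deletion of a vertex (from the vertex set and from all edges). -/
def deleteVertex (H : Hypergraph α) (vtx : α) : Hypergraph α where
  verts := H.verts.erase vtx
  edges := H.edges.image fun e => e.erase vtx
  valid := by
    intro e he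
    rcases Finset.mem_image.mp he with ⟨f, hf, rfl⟩
    intro x hx
    rcases Finset.mem_erase.mp hx with ⟨hx1, hx2⟩
    exact Finset.mem_erase.mpr ⟨hx1, H.valid f hf hx2⟩

/-- Deletion of an edge. -/
def deleteEdge (H : Hypergraph α) (f : Finset α) : Hypergraph α where
  verts := H.verts
  edges := H.edges.erase f
  valid := fun e he => H.valid e (Finset.mem_of_mem_erase he)

/-- The new edge `(⋃ I_v) \ {v}` created by merging on `v`. -/
def mergedEdge (H : Hypergraph α) (vtx : α) : Finset α :=
  ((H.incident vtx).biUnion id).erase vtx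

/-- Merging on a vertex `v`: replace all edges incident to `v` by the single
new edge `(⋃ I_v) \ {v}` (and remove `v` from the vertex set). -/
def merge (H : Hypergraph α) (vtx : α) : Hypergraph α where
  verts := H.verts.erase vtx
  edges := (H.edges \ H.incident vtx) ∪ {H.mergedEdge vtx}
  valid := by
    intro e he
    rcases Finset.mem_union.mp he with he | he
    · rcases Finset.mem_sdiff.mp he with ⟨heE, heI⟩
      intro x hx
      refine Finset.mem_erase.mpr ⟨?_, H.valid e heE hx⟩
      rintro rfl
      exact heI (Finset.mem_filter.mpr ⟨heE, hx⟩)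
    · rw [Finset.mem_singleton] at he
      subst he
      intro x hx
      rcases Finset.mem_erase.mp hx with ⟨hx1, hx2⟩
      rcases Finset.mem_biUnion.mp hx2 with ⟨f, hf, hxf⟩
      exact Finset.mem_erase.mpr ⟨hx1, H.valid f (Finset.mem_filter.mp hf).1 hxf⟩

/-- A single dilution operation. -/
inductive Step : Hypergraph α → Hypergraph α → Prop
  | deleteVertex (H : Hypergraph α) (vtx : α) (hv : vtx ∈ H.verts) :
      Step H (H.deleteVertex vtx)
  | deleteSubedge (H : Hypergraph α) (f e : Finset α) (hf : f ∈ H.edges)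
      (he : e ∈ H.edges) (hfe : f ⊂ e) : Step H (H.deleteEdge f)
  | merge (H : Hypergraph α) (vtx : α) (hv : vtx ∈ H.verts)
      (hne : (H.incident vtx).Nonempty) : Step H (H.merge vtx)

/-- Isomorphism of hypergraphs: a bijection on vertices inducing a bijection
on edges. -/
def Isomorphic (H : Hypergraph α) (G : Hypergraph β) : Prop :=
  ∃ φ : α → β, Set.BijOn φ ↑H.verts ↑G.verts ∧
    Set.BijOn (fun e : Finset α => e.image φ) ↑H.edges ↑G.edges

/-- `H'.DilutesTo H`: `H` is a hypergraph dilution of `H'`, i.e. `H` is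
isomorphic to a hypergraph reachable from `H'` by a finite sequence of
dilution operations. -/
def DilutesTo (H' : Hypergraph α) (H : Hypergraph β) : Prop :=
  ∃ K : Hypergraph α, Relation.ReflTransGen Step H' K ∧ K.Isomorphic H

/-- A tree decomposition of a hypergraph. -/
structure TreeDecomp (H : Hypergraph α) where
  ι : Type
  T : SimpleGraph ι
  isTree : T.IsTree
  bags : ι → Finset α
  bags_sub : ∀ u, bags u ⊆ H.verts
  cover : ∀ e ∈ H.edges, ∃ u, e ⊆ bags u
  link : ∀ vtx : α, (T.induce {u | vtx ∈ bags u}).Preconnected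

/-- The edge cover number `ρ(S)`: the least number of edges whose union
contains `S` (`⊤` if there is no such family). -/
noncomputable def edgeCoverNum (H : Hypergraph α) (S : Finset α) : ℕ∞ :=
  sInf {k : ℕ∞ | ∃ F : Finset (Finset α),
    F ⊆ H.edges ∧ (F.card : ℕ∞) = k ∧ S ⊆ F.biUnion id}

/-- The `ρ`-width of a tree decomposition. -/
noncomputable def TreeDecomp.ghwWidth {H : Hypergraph α} (td : TreeDecomp H) : ℕ∞ :=
  ⨆ u : td.ι, edgeCoverNum H (td.bags u)

/-- Generalised hypertree width. -/
noncomputable def ghw (H : Hypergraph α) : ℕ∞ :=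
  ⨅ td : TreeDecomp H, td.ghwWidth

/-- Treewidth. -/
noncomputable def tw (H : Hypergraph α) : ℕ∞ :=
  ⨅ td : TreeDecomp H, ⨆ u : td.ι, ((td.bags u).card : ℕ∞) - 1

/-- The dual hypergraph: vertices are the edges of `H`, edges are the
incidence sets `I_v`. -/
def dual (H : Hypergraph α) : Hypergraph (Finset α) where
  verts := H.edges
  edges := H.verts.image fun vtx => H.incident vtx
  valid := by
    intro e he
    rcases Finset.mem_image.mp he with ⟨vtx, -, rfl⟩
    intro f hf
    exact (Finset.mem_filter.mp hf).1

/-- A reduced hypergraph: no degree-0 vertex, no empty edge, and no two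
distinct vertices with the same incident edge set. -/
def IsReduced (H : Hypergraph α) : Prop :=
  (∀ vtx ∈ H.verts, (H.incident vtx).Nonempty) ∧
  (∅ ∉ H.edges) ∧
  ∀ vtx ∈ H.verts, ∀ w ∈ H.verts, H.incident vtx = H.incident w → vtx = w

/-- The hypergraph obtained from `H` by keeping only the vertices in `R`
(deleting all others from the vertex set and from all edges) and deleting
all (resulting) empty edges. -/
def reduceBy (H : Hypergraph α) (R : Finset α) : Hypergraph α where
  verts := R
  edges := (H.edges.image fun e => e ∩ R).filter fun e => e ≠ ∅
  valid := by
    intro e he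
    rcases Finset.mem_image.mp (Finset.mem_filter.mp he).1 with ⟨f, -, rfl⟩
    exact Finset.inter_subset_right

/-- `R` is a system of representatives witnessing that `H.reduceBy R` is the
reduced hypergraph of `H`: `R` consists of vertices of positive degree, one
for each class of vertices with identical incident edge sets. -/
def IsReductionRep (H : Hypergraph α) (R : Finset α) : Prop :=
  R ⊆ H.verts ∧
  (∀ vtx ∈ R, (H.incident vtx).Nonempty) ∧
  ∀ vtx ∈ H.verts, (H.incident vtx).Nonempty →
    ∃! w, w ∈ R ∧ H.incident w = H.incident vtx

/-- Adjacency in (the primal graph of) a hypergraph. -/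
def Adj (H : Hypergraph α) (x y : α) : Prop :=
  x ≠ y ∧ ∃ e ∈ H.edges, x ∈ e ∧ y ∈ e

/-- Connectedness of a hypergraph. -/
def Connected (H : Hypergraph α) : Prop :=
  H.verts.Nonempty ∧
  ∀ x ∈ H.verts, ∀ y ∈ H.verts, Relation.ReflTransGen H.Adj x y

/-- A graph, viewed as a 2-uniform hypergraph. -/
def IsGraph (H : Hypergraph α) : Prop := ∀ e ∈ H.edges, e.card = 2

/-- A set of vertices is connected (in the primal graph), staying inside the set. -/
def ConnectedIn (F : Hypergraph β) (S : Finset β) : Prop :=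
  ∀ x ∈ S, ∀ y ∈ S,
    Relation.ReflTransGen (fun a b => a ∈ S ∧ b ∈ S ∧ F.Adj a b) x y

/-- A minor map from the graph `G` into (the primal graph of) `F`. -/
def IsMinorMap (G : Hypergraph γ) (F : Hypergraph β) (μ : γ → Finset β) : Prop :=
  (∀ vtx ∈ G.verts, (μ vtx).Nonempty ∧ μ vtx ⊆ F.verts ∧ F.ConnectedIn (μ vtx)) ∧
  (∀ x ∈ G.verts, ∀ y ∈ G.verts, x ≠ y → μ x ∩ μ y = ∅) ∧
  ∀ x y : γ, G.Adj x y → ∃ a ∈ μ x, ∃ b ∈ μ y, F.Adj a b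

/-- `G` is a minor of (the primal graph of) `F`. -/
def IsMinor (G : Hypergraph γ) (F : Hypergraph β) : Prop :=
  ∃ μ : γ → Finset β, IsMinorMap G F μ

/-- The `n×m` grid graph (as a 2-uniform hypergraph on `[n]×[m]`,
zero-indexed): `(i,j)` and `(i',j')` are adjacent iff `|i−i'| + |j−j'| = 1`. -/
def gridGraph (n m : ℕ) : Hypergraph (ℕ × ℕ) where
  verts := Finset.range n ×ˢ Finset.range m
  edges :=
    (((Finset.range n ×ˢ Finset.range m) ×ˢ (Finset.range n ×ˢ Finset.range m)).filter
        fun p => Nat.dist p.1.1 p.2.1 + Nat.dist p.1.2 p.2.2 = 1).image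
      fun p => {p.1, p.2}
  valid := by
    intro e he
    rcases Finset.mem_image.mp he with ⟨p, hp, rfl⟩
    rcases Finset.mem_product.mp (Finset.mem_filter.mp hp).1 with ⟨h1, h2⟩
    intro x hx
    rcases Finset.mem_insert.mp hx with rfl | hx
    · exact h1
    · rw [Finset.mem_singleton] at hx; subst hx; exact h2

/-- The `n×m` jigsaw: the hypergraph dual of the `n×m` grid graph. -/
def jigsaw (n m : ℕ) : Hypergraph (Finset (ℕ × ℕ)) := (gridGraph n m).dual

/-- A path in a hypergraph: an alternating sequence
`v 0, e 0, v 1, …, e (ℓ-1), v ℓ` of pairwise distinct vertices and pairwise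
distinct edges with `{v i, v (i+1)} ⊆ e i`. -/
structure IsHPath (H : Hypergraph α) (ℓ : ℕ) (pv : ℕ → α) (pe : ℕ → Finset α) : Prop where
  vert_mem : ∀ i ≤ ℓ, pv i ∈ H.verts
  edge_mem : ∀ i < ℓ, pe i ∈ H.edges
  vert_inj : ∀ i ≤ ℓ, ∀ j ≤ ℓ, pv i = pv j → i = j
  edge_inj : ∀ i < ℓ, ∀ j < ℓ, pe i = pe j → i = j
  incid : ∀ i < ℓ, pv i ∈ pe i ∧ pv (i + 1) ∈ pe i

/-- An expressive minor map from the graph `G` into the hypergraph `H`,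
together with its edge witness `ρ`. -/
def IsExpressiveMinorMap (G : Hypergraph γ) (H : Hypergraph α)
    (μ : γ → Finset α) (ρ : Finset γ → Finset α) : Prop :=
  IsMinorMap G H μ ∧
  H.verts = G.verts.biUnion μ ∧
  Set.InjOn ρ ↑G.edges ∧
  (∀ e ∈ G.edges, ρ e ∈ H.edges) ∧
  (∀ x y : γ, ({x, y} : Finset γ) ∈ G.edges →
    (∃ a ∈ ρ {x, y}, a ∈ μ x) ∧ ∃ b ∈ ρ {x, y}, b ∈ μ y) ∧
  ∀ e₁ ∈ G.edges, ∀ e₂ ∈ G.edges, e₁ ≠ e₂ → (e₁ ∩ e₂).Nonempty →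
    ∃ (ℓ : ℕ) (pv : ℕ → α) (pe : ℕ → Finset α),
      IsHPath H ℓ pv pe ∧ pv 0 ∈ ρ e₁ ∧ pv ℓ ∈ ρ e₂ ∧
      ∀ i < ℓ, (∃ f ∈ G.edges, pe i = ρ f) →
        (i = 0 ∧ pe i = ρ e₁) ∨ (i = ℓ - 1 ∧ pe i = ρ e₂)

/-- `G` is an expressive minor of `H`. -/
def IsExpressiveMinor (G : Hypergraph γ) (H : Hypergraph α) : Prop :=
  ∃ (μ : γ → Finset α) (ρ : Finset γ → Finset α), IsExpressiveMinorMap G H μ ρ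

/-- A witness that `P` is an `n×m` pre-jigsaw: mappings `π` (here `vmap`) and
`o` (here `emap`) from the `n×m` jigsaw `J` into `P`, together with a fixed
family of connecting paths. -/
structure PreJigsawWitness (n m : ℕ) (P : Hypergraph α) where
  vmap : Finset (ℕ × ℕ) → α
  emap : Finset (Finset (ℕ × ℕ)) → Finset (Finset α)
  plen : Finset (ℕ × ℕ) → Finset (ℕ × ℕ) → Finset (Finset (ℕ × ℕ)) → ℕ
  ppv : Finset (ℕ × ℕ) → Finset (ℕ × ℕ) → Finset (Finset (ℕ × ℕ)) → ℕ → α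
  ppe : Finset (ℕ × ℕ) → Finset (ℕ × ℕ) → Finset (Finset (ℕ × ℕ)) → ℕ → Finset α
  vmap_mem : ∀ u ∈ (jigsaw n m).verts, vmap u ∈ P.verts
  emap_sub : ∀ e ∈ (jigsaw n m).edges, emap e ⊆ P.edges
  emap_disj : ∀ e ∈ (jigsaw n m).edges, ∀ f ∈ (jigsaw n m).edges, e ≠ f →
    emap e ∩ emap f = ∅
  emap_cover : ∀ g ∈ P.edges, ∃ e ∈ (jigsaw n m).edges, g ∈ emap e
  path_isPath : ∀ e ∈ (jigsaw n m).edges, ∀ u ∈ e, ∀ w ∈ e, u ≠ w →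
    IsHPath P (plen u w e) (ppv u w e) (ppe u w e)
  path_start : ∀ e ∈ (jigsaw n m).edges, ∀ u ∈ e, ∀ w ∈ e, u ≠ w →
    ppv u w e 0 = vmap u
  path_end : ∀ e ∈ (jigsaw n m).edges, ∀ u ∈ e, ∀ w ∈ e, u ≠ w →
    ppv u w e (plen u w e) = vmap w
  path_edges : ∀ e ∈ (jigsaw n m).edges, ∀ u ∈ e, ∀ w ∈ e, u ≠ w →
    ∀ i < plen u w e, ppe u w e i ∈ emap e
  path_avoid : ∀ e ∈ (jigsaw n m).edges, ∀ u ∈ e, ∀ w ∈ e, u ≠ w →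
    ∀ i ≤ plen u w e, ∀ z ∈ (jigsaw n m).verts, ppv u w e i = vmap z →
      ppv u w e i = vmap u ∨ ppv u w e i = vmap w
  vert_cover : ∀ x ∈ P.verts,
    (∃ u ∈ (jigsaw n m).verts, vmap u = x) ∨
    ∃ e ∈ (jigsaw n m).edges, ∃ u ∈ e, ∃ w ∈ e, u ≠ w ∧
      ∃ i ≤ plen u w e, ppv u w e i = x

/-- `P` is an `n×m` pre-jigsaw. -/
def IsPreJigsaw (n m : ℕ) (P : Hypergraph α) : Prop :=
  Nonempty (PreJigsawWitness n m P)


/-!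
A bag of a tree decomposition of `H^d` is a set of edges of `H`; replacing it by the union of
those edges gives a bag of `H` covered by at most as many edges. Every edge `e ∋ v` of `H` lies
in the bag containing `I_v`, so the new bags containing `v` are a union of subtrees through one
common node, hence again a subtree.
-/

section Dual

variable {H : Hypergraph α}

lemma mem_incident {v : α} {e : Finset α} : e ∈ H.incident v ↔ e ∈ H.edges ∧ v ∈ e :=
  Finset.mem_filter

lemma TreeDecomp.exists_incident_subset_bag (td : TreeDecomp H.dual) {v : α}
    (hv : v ∈ H.verts) : ∃ u, H.incident v ⊆ td.bags u :=
  td.cover _ (Finset.mem_image_of_mem _ hv)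

lemma TreeDecomp.preconnected_induce_mem_biUnion_bags (td : TreeDecomp H.dual) (v : α) :
    (td.T.induce {u | v ∈ (td.bags u).biUnion id}).Preconnected := by
  rintro ⟨a, ha⟩ ⟨b, hb⟩
  obtain ⟨e, he, hve⟩ := Finset.mem_biUnion.mp ha
  obtain ⟨u₀, hu₀⟩ := td.exists_incident_subset_bag (H.valid e (td.bags_sub a he) hve)
  have hbag₀ : ∀ {u e}, e ∈ td.bags u → v ∈ e → e ∈ td.bags u₀ := fun hu hv =>
    hu₀ (mem_incident.mpr ⟨td.bags_sub _ hu, hv⟩)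
  have hu₀S : v ∈ (td.bags u₀).biUnion id := Finset.mem_biUnion.mpr ⟨e, hbag₀ he hve, hve⟩
  refine (SimpleGraph.induce_connected_of_patches u₀ hu₀S fun {w} hw => ?_).preconnected _ _
  obtain ⟨e', he', hve'⟩ := Finset.mem_biUnion.mp hw
  exact ⟨{u | e' ∈ td.bags u}, fun u hu => Finset.mem_biUnion.mpr ⟨e', hu, hve'⟩,
    hbag₀ he' hve', he', td.link e' _ _⟩

def TreeDecomp.ofDual (td : TreeDecomp H.dual) : TreeDecomp H where
  ι := td.ι
  T := td.T
  isTree := td.isTree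
  bags u := (td.bags u).biUnion id
  bags_sub u := Finset.biUnion_subset.mpr fun e he => H.valid e (td.bags_sub u he)
  cover e he := by
    rcases e.eq_empty_or_nonempty with rfl | ⟨v, hv⟩
    · exact ⟨td.isTree.connected.nonempty.some, Finset.empty_subset _⟩
    obtain ⟨u, hu⟩ := td.exists_incident_subset_bag (H.valid e he hv)
    exact ⟨u, Finset.subset_biUnion_of_mem id (hu (mem_incident.mpr ⟨he, hv⟩))⟩
  link := td.preconnected_induce_mem_biUnion_bags

lemma edgeCoverNum_biUnion_le_card {F : Finset (Finset α)} (hF : F ⊆ H.edges) :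
    edgeCoverNum H (F.biUnion id) ≤ F.card :=
  sInf_le ⟨F, hF, rfl, subset_rfl⟩

lemma TreeDecomp.ghwWidth_ofDual_le (td : TreeDecomp H.dual) :
    td.ofDual.ghwWidth ≤ ⨆ u, ((td.bags u).card : ℕ∞) :=
  iSup_mono fun u => edgeCoverNum_biUnion_le_card (td.bags_sub u)

end Dual

theorem ghw_le_tw_dual_add_one_general (H : Hypergraph α) :
    ghw H ≤ tw H.dual + 1 := by
  rw [tw, ENat.iInf_add]
  refine le_iInf fun td => ?_
  calc ghw H ≤ td.ofDual.ghwWidth := iInf_le _ _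
    _ ≤ ⨆ u, ((td.bags u).card : ℕ∞) := td.ghwWidth_ofDual_le
    _ ≤ (⨆ u, ((td.bags u).card : ℕ∞) - 1) + 1 :=
      iSup_le fun u => le_tsub_add.trans <|
        add_le_add_left (le_iSup (fun u => ((td.bags u).card : ℕ∞) - 1) u) 1

/-- For a reduced hypergraph, `ghw(H) ≤ tw(H^d) + 1`. -/
theorem ghw_le_tw_dual_add_one (H : Hypergraph α) (h : H.IsReduced) :
    ghw H ≤ tw H.dual + 1 :=
  ghw_le_tw_dual_add_one_general H

end Hypergraph

end DilutionPaper
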